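/- arXiv:2007.08660 — 2 statements merged into one kernel-verified Lean document; each statement's English description precedes it below -/
import Mathlib

section
/- For every real γ with 0 < γ < 1 and every natural number n ≥ 1, the partial sums S_n = ∑_{m=0}^{n} (−1)^m ψ(γ, m) = ∑_{m=0}^{n} C(1−γ, m) bracket their limit: if n is odd then S_n ≥ 2^{1−γ}, and if n is even then S_n ≤ 2^{1−γ}. -/
open Finset Filter

/-- Generalized binomial coefficient `C(x, m) = x (x-1) ⋯ (x-m+1) / m!`. -/
noncomputable def genBinom (x : ℝ) (m : ℕ) : ℝ :=
  (descPochhammer ℝ m).eval x / m.factorial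

/-- Memory function `ψ(γ, m) = (-1)^m ⬝ C(1-γ, m)`. -/
noncomputable def psi (γ : ℝ) (m : ℕ) : ℝ :=
  (-1) ^ m * genBinom (1 - γ) m

/-!
`S_n` is the degree-`n` Taylor polynomial of `y ↦ y ^ (1 - γ)` at `1`, evaluated at `2`. By the
Lagrange form of the remainder, `2 ^ (1 - γ) - S_n = C(1 - γ, n + 1) ξ ^ (-γ - n)` for some
`ξ ∈ (1, 2)`, and since `0 < 1 - γ < 1` the coefficient `C(1 - γ, n + 1)` has the sign `(-1) ^ n`.
-/

open Set Polynomial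

lemma neg_one_pow_mul_psi (γ : ℝ) (m : ℕ) : (-1 : ℝ) ^ m * psi γ m = genBinom (1 - γ) m := by
  rw [psi, ← mul_assoc, ← mul_pow]
  norm_num

lemma iteratedDeriv_rpow_const (r x : ℝ) (k : ℕ) :
    iteratedDeriv k (fun x : ℝ ↦ x ^ r) x = (descPochhammer ℝ k).eval r * x ^ (r - k) := by
  rw [iteratedDeriv_eq_iterate, Real.iter_deriv_rpow_const]

lemma taylorWithinEval_rpow_one {s : Set ℝ} (hs : UniqueDiffOn ℝ s) (hs1 : (1 : ℝ) ∈ s)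
    (α : ℝ) (n : ℕ) (x : ℝ) :
    taylorWithinEval (fun y : ℝ ↦ y ^ α) n s 1 x
      = ∑ m ∈ range (n + 1), genBinom α m * (x - 1) ^ m := by
  rw [taylor_within_apply]
  refine sum_congr rfl fun m _ ↦ ?_
  rw [iteratedDerivWithin_eq_iteratedDeriv hs (Real.contDiffAt_rpow_const_of_ne one_ne_zero) hs1,
    iteratedDeriv_rpow_const, Real.one_rpow, genBinom, smul_eq_mul]
  ring

theorem exists_rpow_eq_sum_genBinom_add {α x : ℝ} (hx : 0 < x) (hx1 : x ≠ 1) (n : ℕ) :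
    ∃ ξ ∈ uIoo 1 x, x ^ α = ∑ m ∈ range (n + 1), genBinom α m * (x - 1) ^ m
      + genBinom α (n + 1) * ξ ^ (α - (n + 1 : ℕ)) * (x - 1) ^ (n + 1) := by
  have hpos : ∀ y ∈ uIcc 1 x, 0 < y := fun y hy ↦
    lt_of_lt_of_le (lt_min one_pos hx) hy.1
  have hcd : ContDiffOn ℝ (n + 1 : ℕ) (fun y : ℝ ↦ y ^ α) (uIcc 1 x) := fun y hy ↦
    (Real.contDiffAt_rpow_const_of_ne (hpos y hy).ne').contDiffWithinAt
  obtain ⟨ξ, hξ, hrem⟩ := 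
    taylor_mean_remainder_lagrange_iteratedDeriv hx1.symm (by exact_mod_cast hcd)
  refine ⟨ξ, hξ, ?_⟩
  rw [taylorWithinEval_rpow_one (uniqueDiffOn_uIcc hx1.symm) left_mem_uIcc,
    iteratedDeriv_rpow_const] at hrem
  rw [genBinom, ← sub_eq_iff_eq_add', hrem]
  ring

lemma neg_one_pow_mul_descPochhammer_succ_eval_pos {α : ℝ} (h0 : 0 < α) (h1 : α < 1) (n : ℕ) :
    0 < (-1) ^ n * (descPochhammer ℝ (n + 1)).eval α := by
  induction n with
  | zero => simpa using h0
  | succ n ih =>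
    have hfactor : 0 < (n + 1 : ℝ) - α := by linarith [(n.cast_nonneg : (0 : ℝ) ≤ n)]
    rw [descPochhammer_succ_right, eval_mul, pow_succ]
    push_cast
    simp only [eval_sub, eval_X, eval_add, eval_natCast, eval_one]
    nlinarith [mul_pos ih hfactor]

lemma neg_one_pow_mul_genBinom_succ_pos {α : ℝ} (h0 : 0 < α) (h1 : α < 1) (n : ℕ) :
    0 < (-1) ^ n * genBinom α (n + 1) := by
  rw [genBinom, mul_div_assoc']
  exact div_pos (neg_one_pow_mul_descPochhammer_succ_eval_pos h0 h1 n) (by positivity)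

theorem partial_sums_bracket_limit_general (γ : ℝ) (hγ0 : 0 < γ) (hγ1 : γ < 1) (n : ℕ) :
    (Odd n → (2 : ℝ) ^ (1 - γ) ≤ ∑ m ∈ Finset.range (n + 1), (-1 : ℝ) ^ m * psi γ m) ∧
    (Even n → ∑ m ∈ Finset.range (n + 1), (-1 : ℝ) ^ m * psi γ m ≤ (2 : ℝ) ^ (1 - γ)) := by
  obtain ⟨ξ, hξ, hexp⟩ := exists_rpow_eq_sum_genBinom_add (α := 1 - γ) two_pos (by norm_num) n
  rw [uIoo_of_le one_le_two] at hξ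
  simp only [show (2 : ℝ) - 1 = 1 by norm_num, one_pow, mul_one] at hexp
  simp_rw [neg_one_pow_mul_psi]
  have hsign : 0 < (-1) ^ n * (2 ^ (1 - γ) - ∑ m ∈ range (n + 1), genBinom (1 - γ) m) := by
    rw [hexp, add_sub_cancel_left, ← mul_assoc]
    exact mul_pos (neg_one_pow_mul_genBinom_succ_pos (by linarith) (by linarith) n)
      (Real.rpow_pos_of_pos (by linarith [hξ.1]) _)
  constructor
  · intro hodd
    rw [hodd.neg_one_pow] at hsign
    linarith
  · intro heven
    rw [heven.neg_one_pow] at hsign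
    linarith

theorem partial_sums_bracket_limit (γ : ℝ) (hγ0 : 0 < γ) (hγ1 : γ < 1) (n : ℕ) (hn : 1 ≤ n) :
    (Odd n → (2 : ℝ) ^ (1 - γ) ≤ ∑ m ∈ Finset.range (n + 1), (-1 : ℝ) ^ m * psi γ m) ∧
    (Even n → ∑ m ∈ Finset.range (n + 1), (-1 : ℝ) ^ m * psi γ m ≤ (2 : ℝ) ^ (1 - γ)) :=
  partial_sums_bracket_limit_general γ hγ0 hγ1 n
end

section
/- Let γ be real with 0 < γ < 2, let a ≥ 2 and s ≥ 2 be natural numbers, and define M(s, η) = a^{s−1} + (2s−1)η − s + 1 for η ∈ ℕ. Then the series ∑_{η=1}^{∞} (2s−1) · ψ(γ, M(s, η)) · (−1)^{M(s, η)} converges; that is, its partial sums over η = 1, …, H have a finite limit as H → ∞. -/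
open Finset Filter

/-- Sampled time offset `M(s, η) = a^(s-1) + (2s-1)η - s + 1` of the adaptive memory
algorithm. -/
def Mfun (a s η : ℕ) : ℕ := a ^ (s - 1) + (2 * s - 1) * η - s + 1
/-!
For `x = 1 - γ ∈ (-1, 1)` the summand is `(2s - 1) C(x, M(s, η))`, and
`C(x, m + 1) = (-1)^m x ∏_{k < m} (k + 1 - x) / (k + 2)`. Each factor of the product lies in
`[0, 1]` and equals `1 - (1 + x) / (k + 2) ≤ exp (-(1 + x) / (k + 2))`, so the product decreases
to `0` by the divergence of the harmonic series. Along `η` the index `M(s, η)` moves in odd steps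
`2s - 1`, so the signs alternate and the alternating series test applies.
-/

open Topology

theorem Antitone.tendsto_alternating_series_comp_odd_progression {f : ℕ → ℝ}
    (hf : Antitone f) (hf0 : Tendsto f atTop (𝓝 0)) (n : ℕ) {d : ℕ} (hd : Odd d) :
    ∃ l, Tendsto (fun H ↦ ∑ i ∈ range H, (-1) ^ (n + d * i) * f (n + d * i)) atTop (𝓝 l) := by
  have hprog : Monotone fun i ↦ n + d * i := fun i j hij ↦
    Nat.add_le_add_left (Nat.mul_le_mul_left d hij) n
  have hprog_tendsto : Tendsto (fun i ↦ n + d * i) atTop atTop :=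
    tendsto_atTop_mono (fun i ↦ le_add_left (Nat.le_mul_of_pos_left i hd.pos)) tendsto_id
  obtain ⟨l, hl⟩ := (hf.comp_monotone hprog).tendsto_alternating_series_of_tendsto_zero
    (hf0.comp hprog_tendsto)
  refine ⟨(-1) ^ n * l, (hl.const_mul _).congr fun H ↦ ?_⟩
  simp only [mul_sum, pow_add, pow_mul, hd.neg_one_pow, Function.comp_apply, mul_assoc]

noncomputable def binomDecay (x : ℝ) (m : ℕ) : ℝ := ∏ k ∈ range m, (k + 1 - x) / (k + 2)

theorem binomDecay_succ (x : ℝ) (m : ℕ) :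
    binomDecay x (m + 1) = binomDecay x m * ((m + 1 - x) / (m + 2)) :=
  prod_range_succ _ _

theorem genBinom_succ (x : ℝ) (m : ℕ) : genBinom x (m + 1) = (-1) ^ m * x * binomDecay x m := by
  induction m with
  | zero => simp [genBinom, binomDecay]
  | succ m ih =>
    have hfac : ((m + 1).factorial : ℝ) ≠ 0 := by positivity
    rw [genBinom, div_eq_iff hfac] at ih
    rw [genBinom, descPochhammer_succ_eval, ih, Nat.factorial_succ (m + 1), binomDecay_succ]
    push_cast
    field_simp
    ring

section binomDecay

variable {x : ℝ}

theorem binomDecay_nonneg (hx : x ≤ 1) (m : ℕ) : 0 ≤ binomDecay x m :=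
  prod_nonneg fun k _ ↦ div_nonneg (by linarith [k.cast_nonneg (α := ℝ)]) (by positivity)

theorem binomDecay_antitone (hx1 : -1 ≤ x) (hx : x ≤ 1) : Antitone (binomDecay x) := by
  refine antitone_nat_of_succ_le fun m ↦ ?_
  rw [binomDecay_succ]
  refine mul_le_of_le_one_right (binomDecay_nonneg hx m) ?_
  rw [div_le_one (by positivity)]
  linarith

theorem binomDecay_le_exp (hx : x ≤ 1) (m : ℕ) :
    binomDecay x m ≤ Real.exp (-(1 + x) * ∑ k ∈ range m, (1 : ℝ) / (k + 2)) := by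
  rw [mul_sum, Real.exp_sum]
  refine prod_le_prod (fun k _ ↦ div_nonneg (by linarith [k.cast_nonneg (α := ℝ)])
    (by positivity)) fun k _ ↦ ?_
  calc ((k : ℝ) + 1 - x) / (k + 2) = -(1 + x) * (1 / (k + 2)) + 1 := by field_simp; ring
    _ ≤ _ := Real.add_one_le_exp _

theorem tendsto_sum_range_one_div_nat_add_two_atTop :
    Tendsto (fun m ↦ ∑ k ∈ range m, (1 : ℝ) / (k + 2)) atTop atTop := by
  refine (not_summable_iff_tendsto_nat_atTop_of_nonneg fun k ↦ by positivity).mp ?_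
  have h := (summable_nat_add_iff 2).not.mpr Real.not_summable_one_div_natCast
  push_cast at h
  exact h

theorem binomDecay_tendsto_zero (hx1 : -1 < x) (hx : x ≤ 1) :
    Tendsto (binomDecay x) atTop (𝓝 0) := by
  have hexp : Tendsto (fun m ↦ Real.exp (-(1 + x) * ∑ k ∈ range m, (1 : ℝ) / (k + 2)))
      atTop (𝓝 0) :=
    Real.tendsto_exp_atBot.comp <| tendsto_neg_atTop_atBot.comp
      (tendsto_sum_range_one_div_nat_add_two_atTop.const_mul_atTop
        (show 0 < 1 + x by linarith)) |>.congr fun m ↦ by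
      simp only [Function.comp_apply, neg_mul]
  exact squeeze_zero (binomDecay_nonneg hx) (binomDecay_le_exp hx) hexp

end binomDecay

theorem psi_mul_neg_one_pow (γ : ℝ) (m : ℕ) : psi γ m * (-1) ^ m = genBinom (1 - γ) m := by
  rw [psi, mul_comm, ← mul_assoc, ← pow_add, ← two_mul, pow_mul]
  simp

theorem Mfun_succ (a : ℕ) {s : ℕ} (hs : 1 ≤ s) (i : ℕ) :
    Mfun a s (i + 1) = a ^ (s - 1) + (s - 1) + (2 * s - 1) * i + 1 := by
  rw [Mfun, mul_add_one]
  omega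

theorem adaptive_interval_series_converges_general (γ : ℝ) (hγ0 : 0 < γ) (hγ2 : γ < 2)
    (a s : ℕ) (hs : 2 ≤ s) :
    ∃ L : ℝ, Filter.Tendsto
      (fun H : ℕ => ∑ η ∈ Finset.Icc 1 H,
        (2 * (s : ℝ) - 1) * psi γ (Mfun a s η) * (-1 : ℝ) ^ Mfun a s η)
      Filter.atTop (nhds L) := by
  have hodd : Odd (2 * s - 1) := ⟨s - 1, by omega⟩
  obtain ⟨l, hl⟩ := (binomDecay_antitone (x := 1 - γ) (by linarith) (by linarith))
    |>.tendsto_alternating_series_comp_odd_progression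
      (binomDecay_tendsto_zero (by linarith) (by linarith)) (a ^ (s - 1) + (s - 1)) hodd
  refine ⟨(2 * s - 1) * (1 - γ) * l, (hl.const_mul _).congr fun H ↦ ?_⟩
  rw [← Ico_add_one_right_eq_Icc, sum_Ico_eq_sum_range, mul_sum, Nat.add_sub_cancel]
  refine sum_congr rfl fun i _ ↦ ?_
  rw [add_comm 1 i, mul_assoc _ (psi _ _), psi_mul_neg_one_pow, Mfun_succ a (by omega),
    genBinom_succ]
  ring

theorem adaptive_interval_series_converges (γ : ℝ) (hγ0 : 0 < γ) (hγ2 : γ < 2)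
    (a s : ℕ) (ha : 2 ≤ a) (hs : 2 ≤ s) :
    ∃ L : ℝ, Filter.Tendsto
      (fun H : ℕ => ∑ η ∈ Finset.Icc 1 H,
        (2 * (s : ℝ) - 1) * psi γ (Mfun a s η) * (-1 : ℝ) ^ Mfun a s η)
      Filter.atTop (nhds L) :=
  adaptive_interval_series_converges_general γ hγ0 hγ2 a s hs
end
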